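/- arXiv:2111.13571 — 6 statements merged into one kernel-verified Lean document; each statement's English description precedes it below -/
import Mathlib

section
/- Let α ∈ ℝ and k ≥ 0 be an integer. Then as n → ∞: if α = 0, the sum ∑_{j=1}^n j^{-1} (log(n/j))^k is asymptotic to (log n)^{k+1}/(k+1); and if α ≠ 0, the sum ∑_{j=1}^n j^{-1-iα} (log(n/j))^k is O((log n)^k). -/
open Filter Finset Complex intervalIntegral

section helpers
variable {c : ℂ}



lemma integral_eval (k : ℕ) {x : ℝ} (hx : 1 ≤ x) :
    ∫ t in (1:ℝ)..x, (1 / t) * (Real.log (x / t)) ^ k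
      = (Real.log x) ^ (k + 1) / (k + 1) := by
  have hx0 : (0:ℝ) < x := lt_of_lt_of_le one_pos hx
  set L := Real.log x with hL
  have key : ∫ t in (1:ℝ)..x, (1 / t) * (L - Real.log t) ^ k
      = L ^ (k + 1) / (k + 1) := by
    have hderiv : ∀ t ∈ Set.uIcc (1:ℝ) x,
        HasDerivAt (fun t : ℝ => -((L - Real.log t) ^ (k+1)) / (k+1))
          ((1 / t) * (L - Real.log t) ^ k) t := by
      intro t ht
      rw [Set.uIcc_of_le hx] at ht
      have ht0 : (0:ℝ) < t := lt_of_lt_of_le one_pos ht.1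
      have h1 : HasDerivAt (fun t : ℝ => L - Real.log t) (-t⁻¹) t :=
        (Real.hasDerivAt_log ht0.ne').const_sub L
      have h2 := (h1.pow (k+1)).neg.div_const ((k:ℝ)+1)
      refine h2.congr_deriv ?_
      have : ((k:ℝ)+1) ≠ 0 := by positivity
      rw [Nat.add_sub_cancel]
      push_cast
      field_simp
    rw [integral_eq_sub_of_hasDerivAt hderiv ?_]
    · simp [Real.log_one, hx0.ne', zero_pow (Nat.succ_ne_zero k), neg_div, hL]
    · apply ContinuousOn.intervalIntegrable
      apply ContinuousOn.mul
      · exact continuousOn_const.div continuousOn_id fun t ht => by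
          rw [Set.uIcc_of_le hx] at ht; exact (lt_of_lt_of_le one_pos ht.1).ne'
      · apply ContinuousOn.pow
        apply continuousOn_const.sub
        apply Real.continuousOn_log.mono
        intro t ht
        rw [Set.uIcc_of_le hx] at ht
        exact (lt_of_lt_of_le one_pos ht.1).ne'
  rw [← key]
  apply integral_congr
  intro t ht
  rw [Set.uIcc_of_le hx] at ht
  have ht0 : (0:ℝ) < t := lt_of_lt_of_le one_pos ht.1
  simp only [Real.log_div hx0.ne' ht0.ne', hL]



lemma sum_bounds (k : ℕ) {n : ℕ} (hn : 1 ≤ n) :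
    (Real.log n) ^ (k+1) / (k+1) ≤ (∑ j ∈ Icc 1 n, (1/(j:ℝ)) * (Real.log ((n:ℝ)/(j:ℝ)))^k) ∧
    (∑ j ∈ Icc 1 n, (1/(j:ℝ)) * (Real.log ((n:ℝ)/(j:ℝ)))^k)
      ≤ (Real.log n)^(k+1)/(k+1) + (Real.log n)^k := by
  obtain ⟨m, rfl⟩ : ∃ m, n = m + 1 := ⟨n - 1, (Nat.succ_pred_eq_of_pos hn).symm⟩
  set n := m + 1 with hnm
  have hn1 : (1:ℝ) ≤ (n:ℝ) := by exact_mod_cast hn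
  have hn0 : (0:ℝ) < (n:ℝ) := lt_of_lt_of_le one_pos hn1
  set f : ℝ → ℝ := fun t => (1/t) * (Real.log ((n:ℝ)/t))^k with hf
  have hcast : (1:ℝ) + ((m:ℕ):ℝ) = (n:ℝ) := by rw [hnm]; push_cast; ring
  have hanti : AntitoneOn f (Set.Icc (1:ℝ) (1 + ((m:ℕ):ℝ))) := by
    rw [hcast]
    intro s hs t ht hst
    have hs0 : (0:ℝ) < s := lt_of_lt_of_le one_pos hs.1
    have ht0 : (0:ℝ) < t := lt_of_lt_of_le one_pos ht.1
    have hnt : (1:ℝ) ≤ (n:ℝ)/t := (one_le_div ht0).2 ht.2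
    have hdiv : (n:ℝ)/t ≤ (n:ℝ)/s := by gcongr
    have hlog : Real.log ((n:ℝ)/t) ≤ Real.log ((n:ℝ)/s) :=
      Real.log_le_log (by positivity) hdiv
    exact mul_le_mul (by gcongr)
      (pow_le_pow_left₀ (Real.log_nonneg hnt) hlog k)
      (pow_nonneg (Real.log_nonneg hnt) k) (by positivity)
  have hint : (∫ x in (1:ℝ)..(1 + ((m:ℕ):ℝ)), f x) = (Real.log n)^(k+1)/(k+1) := by
    rw [hcast]; exact integral_eval k hn1
  have hsum : (∑ j ∈ Icc 1 n, (1/(j:ℝ)) * (Real.log ((n:ℝ)/(j:ℝ)))^k)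
      = ∑ i ∈ range n, f (1 + (i:ℝ)) := by
    rw [← Finset.Ico_add_one_right_eq_Icc, Finset.sum_Ico_eq_sum_range]
    simp only [Nat.add_sub_cancel]
    refine Finset.sum_congr rfl fun i _ => ?_
    simp only [hf]
    push_cast
    norm_num
  have hfnonneg : 0 ≤ f (1 + (m:ℝ)) := by
    refine mul_nonneg (by positivity) (pow_nonneg (Real.log_nonneg ?_) k)
    rw [one_le_div (by positivity)]
    rw [hnm]; push_cast; linarith
  have hf1 : f 1 = (Real.log n)^k := by simp [hf]
  constructor
  · have h1 := hanti.integral_le_sum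
    rw [hint] at h1
    rw [hsum, hnm, Finset.sum_range_succ]
    exact le_add_of_le_of_nonneg h1 hfnonneg
  · have h2 := hanti.sum_le_integral
    rw [hint] at h2
    rw [hsum, hnm, Finset.sum_range_succ']
    push_cast at h2 hf1 ⊢
    simp only [add_zero] at *
    rw [show ((n:ℕ):ℝ) = (m:ℝ)+1 by rw [hnm]; push_cast; ring] at h2 hf1
    linarith [h2]



variable {c : ℂ}

lemma contOn_cpow (hc : c.re = -1) {s : Set ℝ} (hs : ∀ t ∈ s, (0:ℝ) < t) :
    ContinuousOn (fun t : ℝ => (t:ℂ) ^ c) s :=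
  fun t ht => (continuousAt_ofReal_cpow_const t c (Or.inr (hs t ht).ne')).continuousWithinAt

lemma integrable_cpow (hc : c.re = -1) {a b : ℝ} (ha : 0 < a) (hab : a ≤ b) :
    IntervalIntegrable (fun t : ℝ => (t:ℂ)^c) MeasureTheory.volume a b := by
  apply ContinuousOn.intervalIntegrable
  apply contOn_cpow hc
  intro t ht
  rw [Set.uIcc_of_le hab] at ht
  exact lt_of_lt_of_le ha ht.1

lemma integral_cpow_eval (hc : c.re = -1) (hc1 : c ≠ -1) {a b : ℝ} (ha : 0 < a) (hab : a ≤ b) :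
    ∫ t in a..b, (t:ℂ)^c = ((b:ℂ)^(c+1) - (a:ℂ)^(c+1))/(c+1) := by
  have hderiv : ∀ t ∈ Set.uIcc a b,
      HasDerivAt (fun y : ℝ => (y:ℂ)^(c+1)/(c+1)) ((t:ℂ)^c) t := by
    intro t ht
    rw [Set.uIcc_of_le hab] at ht
    exact hasDerivAt_ofReal_cpow_const' (lt_of_lt_of_le ha ht.1).ne' hc1
  rw [integral_eq_sub_of_hasDerivAt hderiv (integrable_cpow hc ha hab)]
  rw [div_sub_div_same]

lemma norm_integral_cpow_le (hc : c.re = -1) (hc1 : c ≠ -1) {a b : ℝ} (ha : 1 ≤ a) (hab : a ≤ b) :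
    ‖∫ t in a..b, (t:ℂ)^c‖ ≤ 2 / ‖c+1‖ := by
  have ha0 : (0:ℝ) < a := lt_of_lt_of_le one_pos ha
  have hb0 : (0:ℝ) < b := lt_of_lt_of_le ha0 hab
  rw [integral_cpow_eval hc hc1 ha0 hab, norm_div]
  have hre1 : (c+1).re = 0 := by simp [Complex.add_re, hc]
  have h1 : ‖(b:ℂ)^(c+1)‖ = 1 := by
    rw [Complex.norm_cpow_eq_rpow_re_of_pos hb0, hre1, Real.rpow_zero]
  have h2 : ‖(a:ℂ)^(c+1)‖ = 1 := by
    rw [Complex.norm_cpow_eq_rpow_re_of_pos ha0, hre1, Real.rpow_zero]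
  gcongr
  calc ‖(b:ℂ)^(c+1) - (a:ℂ)^(c+1)‖ ≤ ‖(b:ℂ)^(c+1)‖ + ‖(a:ℂ)^(c+1)‖ := norm_sub_le _ _
  _ = 2 := by rw [h1, h2]; norm_num

lemma cpow_sub_le (hc : c.re = -1) {j : ℕ} (hj : 1 ≤ j) {t : ℝ}
    (ht : t ∈ Set.Icc (j:ℝ) ((j:ℝ)+1)) :
    ‖(t:ℂ)^c - ((j:ℝ):ℂ)^c‖ ≤ ‖c‖ / (j:ℝ)^2 := by
  have hj1 : (1:ℝ) ≤ (j:ℝ) := by exact_mod_cast hj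
  have hc0 : c ≠ 0 := by intro h; rw [h] at hc; norm_num at hc
  have hcm1 : c - 1 ≠ -1 := by
    intro h
    apply hc0
    have := sub_eq_iff_eq_add.mp h
    rw [this]; ring
  set s : Set ℝ := Set.Icc (j:ℝ) ((j:ℝ)+1) with hsdef
  have hpos : ∀ x ∈ s, (0:ℝ) < x := fun x hx => lt_of_lt_of_le (by linarith) hx.1
  have hderiv : ∀ x ∈ s, HasDerivWithinAt (fun y : ℝ => (y:ℂ)^c) (c * (x:ℂ)^(c-1)) s x := by
    intro x hx
    have h := hasDerivAt_ofReal_cpow_const' (hpos x hx).ne' hcm1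
    rw [sub_add_cancel] at h
    have h2 := h.const_mul c
    have heq : (fun y : ℝ => c * ((y:ℂ)^c/c)) = fun y : ℝ => (y:ℂ)^c := by
      funext y; rw [mul_comm, div_mul_cancel₀ _ hc0]
    rw [heq] at h2
    exact h2.hasDerivWithinAt
  have hbound : ∀ x ∈ s, ‖c * (x:ℂ)^(c-1)‖ ≤ ‖c‖ / (j:ℝ)^2 := by
    intro x hx
    have hx0 := hpos x hx
    rw [norm_mul,
      Complex.norm_cpow_eq_rpow_re_of_pos hx0]
    have hre2 : (c-1).re = -2 := by simp [Complex.sub_re, hc]; norm_num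
    rw [hre2, show (-2:ℝ) = -((2:ℕ):ℝ) by norm_num, Real.rpow_neg hx0.le, Real.rpow_natCast]
    rw [div_eq_mul_inv]
    gcongr
    exact hx.1
  have hmvt := (convex_Icc (j:ℝ) ((j:ℝ)+1)).norm_image_sub_le_of_norm_hasDerivWithin_le
    hderiv hbound (Set.left_mem_Icc.2 (by linarith)) ht
  calc ‖(t:ℂ)^c - ((j:ℝ):ℂ)^c‖ ≤ (‖c‖/(j:ℝ)^2) * ‖t - (j:ℝ)‖ := hmvt
  _ ≤ (‖c‖/(j:ℝ)^2) * 1 := by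
      gcongr
      · rw [Real.norm_eq_abs, _root_.abs_of_nonneg (by linarith [ht.1])]
        linarith [ht.2]
  _ = ‖c‖/(j:ℝ)^2 := mul_one _

lemma rj_bound (hc : c.re = -1) {j : ℕ} (hj : 1 ≤ j) :
    ‖((j:ℝ):ℂ)^c - ∫ t in (j:ℝ)..((j:ℝ)+1), (t:ℂ)^c‖ ≤ ‖c‖/(j:ℝ)^2 := by
  have hj0 : (0:ℝ) < (j:ℝ) := by exact_mod_cast hj.trans_lt' Nat.zero_lt_one
  have hi : IntervalIntegrable (fun t:ℝ => (t:ℂ)^c) MeasureTheory.volume (j:ℝ) ((j:ℝ)+1) :=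
    integrable_cpow hc hj0 (by linarith)
  have hconst : ((j:ℝ):ℂ)^c = ∫ _ in (j:ℝ)..((j:ℝ)+1), ((j:ℝ):ℂ)^c := by
    rw [intervalIntegral.integral_const]; simp
  rw [hconst, ← intervalIntegral.integral_sub intervalIntegrable_const hi]
  have key := intervalIntegral.norm_integral_le_of_norm_le_const
    (C := ‖c‖/(j:ℝ)^2) (f := fun t : ℝ => ((j:ℝ):ℂ)^c - (t:ℂ)^c)
    (a := (j:ℝ)) (b := (j:ℝ)+1) ?_
  · simpa using key
  · intro x hx
    rw [Set.uIoc_of_le (by linarith)] at hx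
    rw [norm_sub_rev]
    exact cpow_sub_le hc hj ⟨hx.1.le, hx.2⟩




lemma part1 (k : ℕ) :
    Asymptotics.IsEquivalent atTop
      (fun n : ℕ => ∑ j ∈ Finset.Icc 1 n,
        (1 / (j : ℝ)) * (Real.log ((n : ℝ) / (j : ℝ))) ^ k)
      (fun n : ℕ => (Real.log (n : ℝ)) ^ (k + 1) / (k + 1)) := by
  have hlog : Tendsto (fun n : ℕ => Real.log n) atTop atTop :=
    Real.tendsto_log_atTop.comp tendsto_natCast_atTop_atTop
  have hO : ((fun n : ℕ => ∑ j ∈ Finset.Icc 1 n,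
        (1 / (j : ℝ)) * (Real.log ((n : ℝ) / (j : ℝ))) ^ k)
      - (fun n : ℕ => (Real.log (n : ℝ)) ^ (k + 1) / (k + 1)))
      =O[atTop] (fun n : ℕ => (Real.log n) ^ k) := by
    rw [Asymptotics.isBigO_iff]
    refine ⟨1, ?_⟩
    filter_upwards [eventually_ge_atTop 1] with n hn
    obtain ⟨h1, h2⟩ := sum_bounds k hn
    have hn1 : (1:ℝ) ≤ (n:ℝ) := by exact_mod_cast hn
    have hlogn : 0 ≤ Real.log n := Real.log_nonneg hn1
    simp only [Pi.sub_apply, Real.norm_eq_abs, one_mul]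
    rw [_root_.abs_of_nonneg (by linarith), _root_.abs_of_nonneg (pow_nonneg hlogn k)]
    linarith
  have ho : (fun n : ℕ => (Real.log n) ^ k)
      =o[atTop] (fun n : ℕ => (Real.log (n : ℝ)) ^ (k + 1) / (k + 1)) := by
    rw [Asymptotics.isLittleO_iff_tendsto']
    · have h2 : Tendsto (fun n : ℕ => ((k:ℝ)+1) * (Real.log n)⁻¹) atTop (nhds (((k:ℝ)+1) * 0)) :=
        (hlog.inv_tendsto_atTop).const_mul _
      rw [mul_zero] at h2
      refine h2.congr' ?_
      filter_upwards [eventually_ge_atTop 2] with n hn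
      have h2n : (2:ℝ) ≤ (n:ℝ) := by exact_mod_cast hn
      have hlogn : 0 < Real.log n := Real.log_pos (by linarith)
      have hk : ((k:ℝ)+1) ≠ 0 := by positivity
      field_simp
      ring
    · filter_upwards [eventually_ge_atTop 2] with n hn h
      exfalso
      have h2n : (2:ℝ) ≤ (n:ℝ) := by exact_mod_cast hn
      have hlogn : 0 < Real.log n := Real.log_pos (by linarith)
      have : (Real.log n) ^ (k+1) / ((k:ℝ)+1) > 0 := by positivity
      rw [h] at this
      exact lt_irrefl 0 this
  exact hO.trans_isLittleO ho



variable {c : ℂ}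

lemma adjacent (hc : c.re = -1) (m : ℕ) :
    ∑ j ∈ Icc 1 m, (∫ t in (j:ℝ)..((j:ℝ)+1), (t:ℂ)^c)
      = ∫ t in (1:ℝ)..((m:ℝ)+1), (t:ℂ)^c := by
  induction m with
  | zero => simp
  | succ m ih =>
    rw [Finset.sum_Icc_succ_top (Nat.succ_le_succ (Nat.zero_le m)), ih]
    push_cast
    rw [intervalIntegral.integral_add_adjacent_intervals
      (integrable_cpow hc one_pos (le_add_of_nonneg_left (Nat.cast_nonneg m)))
      (integrable_cpow hc (by positivity) (by linarith))]

lemma basel (m : ℕ) : ∑ j ∈ Icc 1 m, ((j:ℝ)^2)⁻¹ ≤ 2 := by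
  rcases Nat.eq_zero_or_pos m with rfl | hm
  · simp
  rw [Finset.Icc_eq_cons_Ioc hm, Finset.sum_cons]
  have h := sum_Ioc_inv_sq_le_sub (α := ℝ) one_ne_zero hm
  have hm0 : (0:ℝ) < m := by exact_mod_cast hm
  have : ((m:ℝ))⁻¹ ≥ 0 := by positivity
  norm_num at h ⊢
  linarith

lemma partial_sum_bound (hc : c.re = -1) (hc1 : c ≠ -1) (m : ℕ) :
    ‖∑ j ∈ Icc 1 m, ((j:ℝ):ℂ)^c‖ ≤ 2/‖c+1‖ + 2*‖c‖ := by
  rcases Nat.eq_zero_or_pos m with rfl | hm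
  · simp; positivity
  have hm1 : (1:ℝ) ≤ (m:ℝ)+1 := by have : (0:ℝ) ≤ m := Nat.cast_nonneg m; linarith
  have key : ∑ j ∈ Icc 1 m, ((j:ℝ):ℂ)^c
      = (∑ j ∈ Icc 1 m, (((j:ℝ):ℂ)^c - ∫ t in (j:ℝ)..((j:ℝ)+1), (t:ℂ)^c))
        + ∫ t in (1:ℝ)..((m:ℝ)+1), (t:ℂ)^c := by
    rw [Finset.sum_sub_distrib, adjacent hc m]
    ring
  rw [key]
  have h1 : ‖∑ j ∈ Icc 1 m, (((j:ℝ):ℂ)^c - ∫ t in (j:ℝ)..((j:ℝ)+1), (t:ℂ)^c)‖ ≤ 2*‖c‖ := by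
    calc ‖∑ j ∈ Icc 1 m, (((j:ℝ):ℂ)^c - ∫ t in (j:ℝ)..((j:ℝ)+1), (t:ℂ)^c)‖
        ≤ ∑ j ∈ Icc 1 m, ‖((j:ℝ):ℂ)^c - ∫ t in (j:ℝ)..((j:ℝ)+1), (t:ℂ)^c‖ :=
          norm_sum_le _ _
      _ ≤ ∑ j ∈ Icc 1 m, ‖c‖ * ((j:ℝ)^2)⁻¹ := by
          refine Finset.sum_le_sum fun j hj => ?_
          have hj1 : 1 ≤ j := (Finset.mem_Icc.1 hj).1
          have h := rj_bound hc hj1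
          rwa [div_eq_mul_inv] at h
      _ = ‖c‖ * ∑ j ∈ Icc 1 m, ((j:ℝ)^2)⁻¹ := (Finset.mul_sum _ _ _).symm
      _ ≤ ‖c‖ * 2 := by
          have := basel m
          have h0 : (0:ℝ) ≤ ‖c‖ := norm_nonneg c
          nlinarith [Finset.sum_le_sum (fun j (_ : j ∈ Icc 1 m) => le_refl (((j:ℝ)^2)⁻¹))]
      _ = 2*‖c‖ := mul_comm _ _
  have h2 := norm_integral_cpow_le hc hc1 le_rfl hm1
  calc ‖_ + _‖ ≤ ‖∑ j ∈ Icc 1 m, (((j:ℝ):ℂ)^c - ∫ t in (j:ℝ)..((j:ℝ)+1), (t:ℂ)^c)‖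
        + ‖∫ t in (1:ℝ)..((m:ℝ)+1), (t:ℂ)^c‖ := norm_add_le _ _
    _ ≤ 2*‖c‖ + 2/‖c+1‖ := add_le_add h1 h2
    _ = 2/‖c+1‖ + 2*‖c‖ := by ring




variable {c : ℂ}

lemma abel_bound (hc : c.re = -1) (hc1 : c ≠ -1) (k : ℕ) {n : ℕ} (hn : 1 ≤ n) :
    ‖∑ j ∈ Icc 1 n, (j:ℂ)^c * ((Real.log ((n:ℝ)/(j:ℝ)) : ℂ))^k‖
      ≤ (2/‖c+1‖ + 2*‖c‖) * (Real.log n)^k := by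
  obtain ⟨m, rfl⟩ : ∃ m, n = m + 1 := ⟨n-1, (Nat.succ_pred_eq_of_pos hn).symm⟩
  set n := m + 1 with hnm
  set C := 2/‖c+1‖ + 2*‖c‖ with hCdef
  have hC0 : 0 ≤ C := by positivity
  set φ : ℕ → ℝ := fun i => (Real.log ((n:ℝ)/((i:ℝ)+1)))^k with hφ
  set f : ℕ → ℂ := fun i => ((φ i : ℝ) : ℂ) with hfdef
  set g : ℕ → ℂ := fun i => ((i+1:ℕ):ℂ)^c with hgdef
  have hG : ∀ M : ℕ, ‖∑ i ∈ range M, g i‖ ≤ C := by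
    intro M
    have h : ∑ i ∈ range M, g i = ∑ j ∈ Icc 1 M, ((j:ℝ):ℂ)^c := by
      rw [← Finset.Ico_add_one_right_eq_Icc, Finset.sum_Ico_eq_sum_range, Nat.add_sub_cancel]
      refine Finset.sum_congr rfl fun i _ => ?_
      simp only [hgdef]
      norm_num [Nat.add_comm]
    rw [h]
    exact partial_sum_bound hc hc1 M
  have hre : ∑ j ∈ Icc 1 n, (j:ℂ)^c * ((Real.log ((n:ℝ)/(j:ℝ)) : ℂ))^k
      = ∑ i ∈ range n, f i • g i := by
    rw [← Finset.Ico_add_one_right_eq_Icc, Finset.sum_Ico_eq_sum_range, Nat.add_sub_cancel]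
    refine Finset.sum_congr rfl fun i _ => ?_
    have h1 : (1 + i : ℕ) = i + 1 := Nat.add_comm 1 i
    rw [h1]
    simp only [smul_eq_mul, hfdef, hgdef, hφ, Complex.ofReal_pow]
    push_cast
    ring
  rw [hre, Finset.sum_range_by_parts f g n]
  have hφmono : ∀ i : ℕ, (i:ℝ)+2 ≤ (n:ℝ) → φ (i+1) ≤ φ i := by
    intro i hi
    rw [hnm] at hi
    push_cast at hi
    have h1 : (0:ℝ) < (i:ℝ)+1 := by positivity
    have h2 : (0:ℝ) < (i:ℝ)+2 := by positivity
    refine pow_le_pow_left₀ (Real.log_nonneg ?_) (Real.log_le_log (by positivity) ?_) k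
    · push_cast
      rw [le_div_iff₀ (by positivity : (0:ℝ) < (i:ℝ)+1+1)]
      rw [hnm]; push_cast
      linarith
    · push_cast
      gcongr <;> linarith
  have hφm : φ m = 0 ^ k := by
    simp only [hφ, hnm]
    push_cast
    rw [div_self (by positivity), Real.log_one]
  have hφm0 : 0 ≤ φ m := by rw [hφm]; positivity
  have hφ0 : φ 0 = (Real.log n)^k := by
    simp only [hφ]
    norm_num
  have hfm : ‖f m‖ = φ m := by
    rw [hfdef]
    simp only
    rw [Complex.norm_real, Real.norm_eq_abs, _root_.abs_of_nonneg hφm0]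
  have htel : ∑ i ∈ range m, ‖f (i+1) - f i‖ = φ 0 - φ m := by
    rw [← Finset.sum_range_sub' φ m]
    refine Finset.sum_congr rfl fun i hi => ?_
    have him : i < m := Finset.mem_range.1 hi
    have h2n : (i:ℝ)+2 ≤ (n:ℝ) := by
      rw [hnm]; push_cast
      have : (i:ℝ) + 1 ≤ (m:ℝ) := by exact_mod_cast Nat.succ_le_of_lt him
      linarith
    have hle := hφmono i h2n
    rw [hfdef]
    simp only
    rw [← Complex.ofReal_sub, Complex.norm_real, Real.norm_eq_abs,
      abs_of_nonpos (by linarith), neg_sub]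
  have hn1 : n - 1 = m := by rw [hnm]; exact Nat.succ_sub_one m
  rw [hn1]
  calc ‖f m • (∑ i ∈ range n, g i)
        - ∑ i ∈ range m, (f (i+1) - f i) • (∑ j ∈ range (i+1), g j)‖
      ≤ ‖f m • (∑ i ∈ range n, g i)‖
        + ‖∑ i ∈ range m, (f (i+1) - f i) • (∑ j ∈ range (i+1), g j)‖ := norm_sub_le _ _
    _ ≤ φ m * C + ∑ i ∈ range m, ‖f (i+1) - f i‖ * C := by
        refine add_le_add ?_ ?_
        · rw [norm_smul, hfm]
          exact mul_le_mul_of_nonneg_left (hG n) hφm0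
        · refine le_trans (norm_sum_le _ _) (Finset.sum_le_sum fun i _ => ?_)
          rw [norm_smul]
          exact mul_le_mul_of_nonneg_left (hG (i+1)) (norm_nonneg _)
    _ = φ m * C + (φ 0 - φ m) * C := by rw [← Finset.sum_mul, htel]
    _ = C * φ 0 := by ring
    _ = C * (Real.log n)^k := by rw [hφ0]


end helpers

theorem stmt0 (α : ℝ) (k : ℕ) :
    (α = 0 →
      Asymptotics.IsEquivalent atTop
        (fun n : ℕ => ∑ j ∈ Finset.Icc 1 n,
          (1 / (j : ℝ)) * (Real.log ((n : ℝ) / (j : ℝ))) ^ k)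
        (fun n : ℕ => (Real.log (n : ℝ)) ^ (k + 1) / (k + 1))) ∧
    (α ≠ 0 →
      (fun n : ℕ => ∑ j ∈ Finset.Icc 1 n,
          (j : ℂ) ^ (-1 - Complex.I * (α : ℂ)) *
            (Complex.ofReal (Real.log ((n : ℝ) / (j : ℝ)))) ^ k)
        =O[atTop] fun n : ℕ => (Real.log (n : ℝ)) ^ k) := by
  constructor
  · intro _
    exact part1 k
  · intro hα
    set c : ℂ := -1 - Complex.I * (α:ℂ) with hcdef
    have hc : c.re = -1 := by
      rw [hcdef]
      simp
    have hc1 : c ≠ -1 := by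
      intro h
      rw [hcdef] at h
      apply hα
      have h2 : Complex.I * (α:ℂ) = 0 := by linear_combination -h
      rcases mul_eq_zero.mp h2 with h3 | h3
      · exact absurd h3 Complex.I_ne_zero
      · exact_mod_cast h3
    rw [Asymptotics.isBigO_iff]
    refine ⟨2/‖c+1‖ + 2*‖c‖, ?_⟩
    filter_upwards [eventually_ge_atTop 1] with n hn
    have hb := abel_bound hc hc1 k hn
    have hn1 : (1:ℝ) ≤ (n:ℝ) := by exact_mod_cast hn
    have hlogn : 0 ≤ Real.log n := Real.log_nonneg hn1
    calc ‖∑ j ∈ Finset.Icc 1 n, (j:ℂ)^c * (Complex.ofReal (Real.log ((n:ℝ)/(j:ℝ))))^k‖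
        ≤ (2/‖c+1‖ + 2*‖c‖) * (Real.log n)^k := hb
      _ = (2/‖c+1‖ + 2*‖c‖) * ‖(Real.log n)^k‖ := by
          rw [Real.norm_eq_abs, _root_.abs_of_nonneg (pow_nonneg hlogn k)]
end

section
/- Let T be a bounded operator on a complex Banach space X whose adjoint T* maps a closed subspace Y ⊆ X* into itself. Then σ(T*|_Y) ⊆ σ(T)^, where σ(T)^ is the polynomially convex hull of σ(T), i.e. the union of σ(T) with all bounded connected components of ℂ∖σ(T). -/
/-- The topological dual of a seminormed space `E`, as `NormedSpace.Dual` was in the older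
Mathlib (a type synonym for `E →L[𝕜] 𝕜` carrying the operator norm). -/
def NormedSpace.Dual (𝕜 : Type*) [NontriviallyNormedField 𝕜] (E : Type*)
    [SeminormedAddCommGroup E] [NormedSpace 𝕜 E] : Type _ :=
  E →L[𝕜] 𝕜

noncomputable instance NormedSpace.Dual.instNormedAddCommGroup (𝕜 : Type*) [NontriviallyNormedField 𝕜]
    (E : Type*) [NormedAddCommGroup E] [NormedSpace 𝕜 E] :
    NormedAddCommGroup (NormedSpace.Dual 𝕜 E) :=
  ContinuousLinearMap.toNormedAddCommGroup

noncomputable instance NormedSpace.Dual.instNormedSpace (𝕜 : Type*) [NontriviallyNormedField 𝕜]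
    (E : Type*) [NormedAddCommGroup E] [NormedSpace 𝕜 E] :
    NormedSpace 𝕜 (NormedSpace.Dual 𝕜 E) :=
  ContinuousLinearMap.toNormedSpace

noncomputable instance dualFunLikePort (X : Type*) [NormedAddCommGroup X] [NormedSpace ℂ X] :
    FunLike (NormedSpace.Dual ℂ X) X ℂ :=
  ContinuousLinearMap.funLike

noncomputable instance dualClmClassPort (X : Type*) [NormedAddCommGroup X] [NormedSpace ℂ X] :
    ContinuousLinearMapClass (NormedSpace.Dual ℂ X) ℂ X ℂ :=
  ContinuousLinearMap.continuousSemilinearMapClass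

noncomputable instance dualCompletePort (X : Type*) [NormedAddCommGroup X] [NormedSpace ℂ X] :
    CompleteSpace (NormedSpace.Dual ℂ X) :=
  inferInstanceAs (CompleteSpace (X →L[ℂ] ℂ))

@[ext]
theorem dualExtPort {X : Type*} [NormedAddCommGroup X] [NormedSpace ℂ X]
    {f g : NormedSpace.Dual ℂ X} (h : ∀ x, f x = g x) : f = g :=
  ContinuousLinearMap.ext h

/-- The polynomially convex hull of a set `K ⊆ ℂ`: `K` together with all bounded
connected components of its complement. -/
def polyHull (K : Set ℂ) : Set ℂ :=
  {z | z ∈ K ∨ Bornology.IsBounded (connectedComponentIn Kᶜ z)}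


/-- Powers of `T` composed with an element of an invariant subspace stay in it. -/
lemma comp_pow_mem {X : Type*} [NormedAddCommGroup X] [NormedSpace ℂ X]
    (T : X →L[ℂ] X) (Y : Submodule ℂ (NormedSpace.Dual ℂ X))
    (hYinv : ∀ y : NormedSpace.Dual ℂ X, y ∈ Y → y.comp T ∈ Y)
    {y : NormedSpace.Dual ℂ X} (hy : y ∈ Y) (n : ℕ) : y.comp (T ^ n) ∈ Y := by
  induction n with
  | zero => exact hy
  | succ n ih =>
      have h : y.comp (T ^ (n + 1)) = (y.comp (T ^ n)).comp T := by
        ext x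
        simp [pow_succ, ContinuousLinearMap.mul_apply]
        rfl
      rw [h]
      exact hYinv _ ih

set_option synthInstance.maxHeartbeats 1000000 in
set_option maxHeartbeats 1000000 in
/-- The key analytic-continuation step: if `z` lies in the unbounded component of the
complement of the spectrum, then for `y ∈ Y` the functional `y ∘ (z - T)⁻¹` lies in `Y`. -/
lemma key_mem {X : Type*} [NormedAddCommGroup X] [NormedSpace ℂ X] [CompleteSpace X]
    (T : X →L[ℂ] X) (Y : Submodule ℂ (NormedSpace.Dual ℂ X))
    (hYc : IsClosed (Y : Set (NormedSpace.Dual ℂ X)))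
    (hYinv : ∀ y : NormedSpace.Dual ℂ X, y ∈ Y → y.comp T ∈ Y)
    {z : ℂ} (hz : z ∉ spectrum ℂ T)
    (hub : ¬ Bornology.IsBounded (connectedComponentIn (spectrum ℂ T)ᶜ z))
    {y : NormedSpace.Dual ℂ X} (hy : y ∈ Y) :
    y.comp (Ring.inverse (algebraMap ℂ (X →L[ℂ] X) z - T)) ∈ Y := by
  haveI : IsClosed (Y : Set (NormedSpace.Dual ℂ X)) := hYc
  -- the quotient map as a continuous linear map
  let q : NormedSpace.Dual ℂ X →L[ℂ] (NormedSpace.Dual ℂ X ⧸ Y) :=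
    LinearMap.mkContinuous Y.mkQ 1 (fun x => by
      simpa using Submodule.Quotient.norm_mk_le Y x)
  let g : (X →L[ℂ] X) →L[ℂ] (NormedSpace.Dual ℂ X ⧸ Y) :=
    q.comp ((ContinuousLinearMap.compL ℂ X X ℂ) y)
  have hg : ∀ B : X →L[ℂ] X, g B = Submodule.Quotient.mk (y.comp B) := fun B => rfl
  have hgpow : ∀ n : ℕ, g (T ^ n) = 0 := by
    intro n
    rw [hg]
    exact (Submodule.Quotient.mk_eq_zero Y).mpr (comp_pow_mem T Y hYinv hy n)
  set f : ℂ → (NormedSpace.Dual ℂ X ⧸ Y) := fun w => g (resolvent T w) with hf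
  have hρ : (spectrum ℂ T)ᶜ = resolventSet ℂ T := by
    simp [spectrum]
  -- `f` is analytic on the resolvent set
  have hfa : AnalyticOnNhd ℂ f (spectrum ℂ T)ᶜ := by
    apply DifferentiableOn.analyticOnNhd _ (spectrum.isClosed T).isOpen_compl
    intro w hw
    have hw' : w ∈ resolventSet ℂ T := by rwa [← hρ]
    exact (g.differentiableAt.comp w
      (spectrum.hasDerivAt_resolvent hw').differentiableAt).differentiableWithinAt
  -- `f` vanishes for large `‖w‖` (Neumann series)
  have hvan : ∀ w : ℂ, ‖T‖ < ‖w‖ → f w = 0 := by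
    intro w hw
    have hw0 : w ≠ 0 := by
      intro h
      rw [h, norm_zero] at hw
      exact (norm_nonneg T).not_gt hw
    have hwpos : (0 : ℝ) < ‖w‖ := lt_of_le_of_lt (norm_nonneg T) hw
    set t : X →L[ℂ] X := w⁻¹ • T with ht
    have htn : ‖t‖ < 1 := by
      calc ‖t‖ ≤ ‖w⁻¹‖ * ‖T‖ := ContinuousLinearMap.opNorm_smul_le _ _
      _ < 1 := by
        rw [norm_inv, inv_mul_eq_div]
        exact (div_lt_one hwpos).mpr hw
    have hsumm : Summable (fun n : ℕ => t ^ n) := summable_geometric_of_norm_lt_one htn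
    have hA : algebraMap ℂ (X →L[ℂ] X) w - T = w • (1 - t) := by
      rw [smul_sub, ht, smul_smul, mul_inv_cancel₀ hw0, one_smul,
        Algebra.algebraMap_eq_smul_one]
    -- build the unit explicitly
    let u : (X →L[ℂ] X)ˣ := Units.oneSub t htn
    let v : (X →L[ℂ] X)ˣ :=
      { val := w • ((u : X →L[ℂ] X))
        inv := w⁻¹ • ((u⁻¹ : (X →L[ℂ] X)ˣ) : X →L[ℂ] X)
        val_inv := by
          rw [smul_mul_smul_comm, mul_inv_cancel₀ hw0, u.mul_inv, one_smul]
        inv_val := by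
          rw [smul_mul_smul_comm, inv_mul_cancel₀ hw0, u.inv_mul, one_smul] }
    have hval : algebraMap ℂ (X →L[ℂ] X) w - T = (v : X →L[ℂ] X) := by
      rw [hA]; rfl
    have hinv : Ring.inverse (algebraMap ℂ (X →L[ℂ] X) w - T)
        = w⁻¹ • ((u⁻¹ : (X →L[ℂ] X)ˣ) : X →L[ℂ] X) := by
      rw [hval, Ring.inverse_unit v]
      rfl
    have huinv : ((u⁻¹ : (X →L[ℂ] X)ˣ) : X →L[ℂ] X) = ∑' n : ℕ, t ^ n := rfl
    have : f w = w⁻¹ • g (∑' n : ℕ, t ^ n) := by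
      rw [hf]
      show g (resolvent T w) = _
      rw [resolvent, hinv, huinv, map_smul]
    rw [this, g.map_tsum hsumm]
    have hterm : ∀ n : ℕ, g (t ^ n) = 0 := by
      intro n
      rw [ht, smul_pow, map_smul, hgpow, smul_zero]
    simp [hterm]
  -- pick a large point in the unbounded component
  obtain ⟨w₁, hw₁U, hw₁⟩ : ∃ w₁ ∈ connectedComponentIn (spectrum ℂ T)ᶜ z, ‖T‖ < ‖w₁‖ := by
    by_contra h
    push_neg at h
    exact hub (isBounded_iff_forall_norm_le.mpr ⟨‖T‖, h⟩)
  have hUo : IsOpen (connectedComponentIn (spectrum ℂ T)ᶜ z) :=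
    (spectrum.isClosed T).isOpen_compl.connectedComponentIn
  have hUconn : IsPreconnected (connectedComponentIn (spectrum ℂ T)ᶜ z) :=
    isPreconnected_connectedComponentIn
  have hzU : z ∈ connectedComponentIn (spectrum ℂ T)ᶜ z := mem_connectedComponentIn hz
  have hfa' : AnalyticOnNhd ℂ f (connectedComponentIn (spectrum ℂ T)ᶜ z) :=
    hfa.mono (connectedComponentIn_subset _ _)
  have hev : f =ᶠ[nhds w₁] 0 := by
    filter_upwards [IsOpen.mem_nhds (isOpen_lt continuous_const continuous_norm) hw₁] with x hx
    exact hvan x hx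
  have hzero : f z = 0 :=
    hfa'.eqOn_zero_of_preconnected_of_eventuallyEq_zero hUconn hw₁U hev hzU
  have : (Submodule.Quotient.mk (y.comp (Ring.inverse (algebraMap ℂ (X →L[ℂ] X) z - T)))
      : NormedSpace.Dual ℂ X ⧸ Y) = 0 := hzero
  exact (Submodule.Quotient.mk_eq_zero Y).mp this

set_option synthInstance.maxHeartbeats 1000000 in
set_option maxHeartbeats 2000000 in
theorem stmt5 {X : Type*} [NormedAddCommGroup X] [NormedSpace ℂ X] [CompleteSpace X]
    (T : X →L[ℂ] X) (Y : Submodule ℂ (NormedSpace.Dual ℂ X))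
    (hYc : IsClosed (Y : Set (NormedSpace.Dual ℂ X)))
    (hYinv : ∀ y : NormedSpace.Dual ℂ X, y ∈ Y → y.comp T ∈ Y)
    (S : Y →L[ℂ] Y)
    (hS : ∀ y : Y, (S y : NormedSpace.Dual ℂ X) = (y : NormedSpace.Dual ℂ X).comp T) :
    spectrum ℂ S ⊆ polyHull (spectrum ℂ T) := by
  intro z hzS
  by_contra hzn
  simp only [polyHull, Set.mem_setOf_eq, not_or] at hzn
  obtain ⟨hz1, hz2⟩ := hzn
  have hAu : IsUnit (algebraMap ℂ (X →L[ℂ] X) z - T) := spectrum.notMem_iff.mp hz1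
  set A : X →L[ℂ] X := algebraMap ℂ (X →L[ℂ] X) z - T with hAdef
  set B : X →L[ℂ] X := Ring.inverse A with hBdef
  have hBA : B * A = 1 := Ring.inverse_mul_cancel A hAu
  have hAB : A * B = 1 := Ring.mul_inverse_cancel A hAu
  have hBmem : ∀ w : NormedSpace.Dual ℂ X, w ∈ Y → w.comp B ∈ Y :=
    fun w hw => key_mem T Y hYc hYinv hz1 hz2 hw
  let M : NormedSpace.Dual ℂ X →L[ℂ] NormedSpace.Dual ℂ X :=
    (ContinuousLinearMap.compL ℂ X X ℂ).flip B
  let L : Y →L[ℂ] Y := (M.comp Y.subtypeL).codRestrict Y (fun y => hBmem _ y.2)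
  -- pointwise versions of the inverse identities
  have hBA' : ∀ x : X, z • B x - B (T x) = x := by
    intro x
    have := DFunLike.congr_fun hBA x
    simpa [ContinuousLinearMap.mul_apply, hAdef, Algebra.algebraMap_eq_smul_one,
      map_sub, map_smul] using this
  have hAB' : ∀ x : X, z • B x - T (B x) = x := by
    intro x
    have := DFunLike.congr_fun hAB x
    simpa [ContinuousLinearMap.mul_apply, hAdef, Algebra.algebraMap_eq_smul_one] using this
  have h1 : (algebraMap ℂ (Y →L[ℂ] Y) z - S) * L = 1 := by
    ext y x
    have hLy : ((L y : Y) : NormedSpace.Dual ℂ X) = (y : NormedSpace.Dual ℂ X).comp B := rfl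
    have hSLy : ((S (L y) : Y) : NormedSpace.Dual ℂ X)
        = ((y : NormedSpace.Dual ℂ X).comp B).comp T := by rw [hS, hLy]
    show (((algebraMap ℂ (Y →L[ℂ] Y) z - S) (L y) : Y) : NormedSpace.Dual ℂ X) x
        = ((y : NormedSpace.Dual ℂ X)) x
    have : ((algebraMap ℂ (Y →L[ℂ] Y) z - S) (L y) : Y)
        = z • (L y) - S (L y) := by
      simp [Algebra.algebraMap_eq_smul_one]
    rw [this]
    have hco : (((z • (L y) - S (L y) : Y)) : NormedSpace.Dual ℂ X)
        = z • ((y : NormedSpace.Dual ℂ X).comp B)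
          - ((y : NormedSpace.Dual ℂ X).comp B).comp T := by
      push_cast [hSLy, hLy]
      rfl
    rw [hco]
    have : z • (y : NormedSpace.Dual ℂ X) (B x) - (y : NormedSpace.Dual ℂ X) (B (T x))
        = (y : NormedSpace.Dual ℂ X) x := by
      rw [← map_smul, ← map_sub, hBA' x]
    exact this
  have h2 : L * (algebraMap ℂ (Y →L[ℂ] Y) z - S) = 1 := by
    ext y x
    show ((L ((algebraMap ℂ (Y →L[ℂ] Y) z - S) y) : Y) : NormedSpace.Dual ℂ X) x
        = ((y : NormedSpace.Dual ℂ X)) x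
    have hay : ((algebraMap ℂ (Y →L[ℂ] Y) z - S) y : Y) = z • y - S y := by
      simp [Algebra.algebraMap_eq_smul_one]
    rw [hay]
    have hLco : ((L (z • y - S y) : Y) : NormedSpace.Dual ℂ X)
        = ((z • y - S y : Y) : NormedSpace.Dual ℂ X).comp B := rfl
    rw [hLco]
    have hcoe : ((z • y - S y : Y) : NormedSpace.Dual ℂ X)
        = z • (y : NormedSpace.Dual ℂ X) - (show NormedSpace.Dual ℂ X from (y : NormedSpace.Dual ℂ X).comp T) := by
      push_cast [hS]
      rfl
    rw [hcoe]
    have : z • (y : NormedSpace.Dual ℂ X) (B x) - (y : NormedSpace.Dual ℂ X) (T (B x))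
        = (y : NormedSpace.Dual ℂ X) x := by
      rw [← map_smul, ← map_sub]
      congr 1
      exact hAB' x
    exact this
  have hSu : IsUnit (algebraMap ℂ (Y →L[ℂ] Y) z - S) :=
    ⟨⟨algebraMap ℂ (Y →L[ℂ] Y) z - S, L, h1, h2⟩, rfl⟩
  exact (spectrum.mem_iff.mp hzS) hSu
end

section
/- Let T be a bounded operator on a complex Banach space X whose adjoint maps a closed norm-determining subspace Y ⊆ X* into itself. Then the polynomially convex hulls of the spectra agree: σ(T*|_Y)^ = σ(T)^. -/
set_option maxHeartbeats 2000000
set_option synthInstance.maxHeartbeats 400000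

open Metric Set Bornology

open Metric Set Bornology

lemma connCompl {R : ℝ} (hR : 0 ≤ R) : IsConnected ((Metric.closedBall (0:ℂ) R)ᶜ) := by
  have hrank : 1 < Module.rank ℝ ℂ := by
    rw [Complex.rank_real_complex]; norm_num
  have h1 : IsConnected ((Set.Ioi R) ×ˢ (Metric.sphere (0:ℂ) 1)) :=
    (isConnected_Ioi).prod (isConnected_sphere hrank 0 zero_le_one)
  have h2 := h1.image (fun p : ℝ × ℂ => p.1 • p.2)
    ((continuous_fst.smul continuous_snd).continuousOn)
  convert h2 using 1
  ext z
  simp only [Set.mem_image, Set.mem_prod, Set.mem_Ioi, mem_sphere_iff_norm, sub_zero,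
    Set.mem_compl_iff, Metric.mem_closedBall, dist_zero_right, not_le]
  constructor
  · intro hz
    have hz0 : z ≠ 0 := by
      intro h; rw [h, norm_zero] at hz; exact absurd hz (not_lt.2 hR)
    refine ⟨(‖z‖, ‖z‖⁻¹ • z), ⟨hz, ?_⟩, ?_⟩
    · rw [norm_smul, norm_inv, norm_norm, inv_mul_cancel₀ (norm_ne_zero_iff.2 hz0)]
    · simp only [smul_smul]
      rw [mul_inv_cancel₀ (norm_ne_zero_iff.2 hz0), one_smul]
  · rintro ⟨⟨r, u⟩, ⟨hr, hu⟩, rfl⟩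
    simp only [norm_smul, hu, mul_one, Real.norm_eq_abs]
    rwa [abs_of_pos (lt_of_le_of_lt hR hr)]

lemma polyHull_eq_compl {K : Set ℂ} {R : ℝ} (hR : 0 ≤ R) (hK : K ⊆ Metric.closedBall 0 R)
    {w : ℂ} (hw : R < ‖w‖) :
    polyHull K = (connectedComponentIn Kᶜ w)ᶜ := by
  unfold polyHull
  set Ω := connectedComponentIn Kᶜ w with hΩ
  have hB : IsConnected ((Metric.closedBall (0:ℂ) R)ᶜ) := connCompl hR
  have hBK : (Metric.closedBall (0:ℂ) R)ᶜ ⊆ Kᶜ := Set.compl_subset_compl.2 hK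
  have hwB : w ∈ (Metric.closedBall (0:ℂ) R)ᶜ := by
    simp only [Set.mem_compl_iff, Metric.mem_closedBall, dist_zero_right, not_le]; exact hw
  have hBΩ : (Metric.closedBall (0:ℂ) R)ᶜ ⊆ Ω :=
    hB.isPreconnected.subset_connectedComponentIn hwB hBK
  have hΩunb : ¬ Bornology.IsBounded Ω := by
    intro h
    obtain ⟨r, hr⟩ := h.subset_closedBall 0
    have : ((max R r + 1 : ℝ) : ℂ) ∈ Ω := by
      apply hBΩ
      simp only [Set.mem_compl_iff, Metric.mem_closedBall, dist_zero_right, not_le,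
        Complex.norm_real, Real.norm_eq_abs]
      have h0 : R ≤ max R r := le_max_left _ _
      rw [abs_of_nonneg (by linarith)]; linarith
    have := hr this
    simp only [Metric.mem_closedBall, dist_zero_right, Complex.norm_real,
      Real.norm_eq_abs] at this
    have h1 : r ≤ max R r := le_max_right _ _
    have h0 : R ≤ max R r := le_max_left _ _
    rw [abs_of_nonneg (by linarith)] at this; linarith
  ext z
  simp only [Set.mem_setOf_eq, Set.mem_compl_iff]
  constructor
  · rintro (hzK | hzb)
    · intro hzΩ
      exact (connectedComponentIn_subset Kᶜ w hzΩ) hzK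
    · intro hzΩ
      rw [← connectedComponentIn_eq hzΩ] at hzb
      exact hΩunb hzb
  · intro hz
    by_cases hzK : z ∈ K
    · exact Or.inl hzK
    · right
      by_contra hb
      have hsub : ¬ (connectedComponentIn Kᶜ z ⊆ Metric.closedBall 0 R) := by
        intro h; exact hb (Metric.isBounded_closedBall.subset h)
      obtain ⟨c, hcC, hcB⟩ := Set.not_subset.1 hsub
      have hcΩ : c ∈ Ω := hBΩ hcB
      have h1 : connectedComponentIn Kᶜ z = connectedComponentIn Kᶜ c :=
        connectedComponentIn_eq hcC
      have h2 : Ω = connectedComponentIn Kᶜ c := connectedComponentIn_eq hcΩ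
      have hzmem : z ∈ connectedComponentIn Kᶜ z := mem_connectedComponentIn hzK
      rw [h1, ← h2] at hzmem
      exact hz hzmem


open Metric Set Bornology

lemma omega_subset {A : Type*} {B : Type*} [NormedRing A] [NormedAlgebra ℂ A] [CompleteSpace A]
    [NormedRing B] [NormedAlgebra ℂ B] [CompleteSpace B] (a : A) (b : B)
    (hab : ∀ μ : ℂ, μ ∈ resolventSet ℂ a → μ ∈ resolventSet ℂ b →
      ‖Ring.inverse (algebraMap ℂ A μ - a)‖ ≤ ‖Ring.inverse (algebraMap ℂ B μ - b)‖)
    {w : ℂ} (hwa : w ∈ resolventSet ℂ a) (hwb : w ∈ resolventSet ℂ b) :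
    connectedComponentIn (spectrum ℂ b)ᶜ w ⊆ (spectrum ℂ a)ᶜ := by
  have hρb : (spectrum ℂ b)ᶜ = resolventSet ℂ b := compl_compl _
  set Ω := connectedComponentIn (spectrum ℂ b)ᶜ w with hΩdef
  have hΩb : Ω ⊆ resolventSet ℂ b := hρb ▸ connectedComponentIn_subset _ _
  have hΩopen : IsOpen Ω := by
    apply IsOpen.connectedComponentIn
    rw [hρb]; exact spectrum.isOpen_resolventSet b
  have hΩconn : IsPreconnected Ω := isPreconnected_connectedComponentIn
  have hwΩ : w ∈ Ω := mem_connectedComponentIn (by rw [hρb]; exact hwb)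
  intro l hl
  suffices h : Ω ⊆ resolventSet ℂ a ∩ Ω by
    have := (h hl).1
    simpa [spectrum] using this
  apply hΩconn.subset_of_closure_inter_subset
    ((spectrum.isOpen_resolventSet a).inter hΩopen) ⟨w, hwΩ, hwa, hwΩ⟩
  rintro l' ⟨hlc, hlΩ⟩
  refine ⟨?_, hlΩ⟩
  have hlb : l' ∈ resolventSet ℂ b := hΩb hlΩ
  by_cases hsub : Subsingleton A
  · exact spectrum.mem_resolventSet_iff.2 (isUnit_of_subsingleton _)
  haveI : Nontrivial A := not_subsingleton_iff_nontrivial.1 hsub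
  have hub : IsUnit (algebraMap ℂ B l' - b) := spectrum.mem_resolventSet_iff.1 hlb
  set M := ‖Ring.inverse (algebraMap ℂ B l' - b)‖ + 1 with hMdef
  have hM : 0 < M := by positivity
  have hcont : ContinuousAt (fun μ : ℂ => Ring.inverse (algebraMap ℂ B μ - b)) l' := by
    have h1 : Continuous fun μ : ℂ => algebraMap ℂ B μ - b :=
      (continuous_algebraMap ℂ B).sub continuous_const
    have h2 := NormedRing.inverse_continuousAt hub.unit
    rw [IsUnit.unit_spec] at h2
    have h3 : ContinuousAt (Ring.inverse ∘ (fun μ : ℂ => algebraMap ℂ B μ - b)) l' :=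
      ContinuousAt.comp (x := l') h2 h1.continuousAt
    rwa [Function.comp_def] at h3
  have hev : ∀ᶠ μ in nhds l', ‖Ring.inverse (algebraMap ℂ B μ - b)‖ < M :=
    hcont.norm (Iio_mem_nhds (lt_add_one _))
  obtain ⟨ε, hε, hball⟩ := Metric.eventually_nhds_iff_ball.1 hev
  set c := ‖(1 : A)‖ + 1 with hcdef
  have hc : 0 < c := by positivity
  have hδ : 0 < min ε (M⁻¹ / c) := lt_min hε (by positivity)
  obtain ⟨μ, hμu, hμd⟩ := Metric.mem_closure_iff.1 hlc _ hδ
  have hμa : IsUnit (algebraMap ℂ A μ - a) := spectrum.mem_resolventSet_iff.1 hμu.1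
  have hμb : μ ∈ resolventSet ℂ b := hΩb hμu.2
  have hnorm : ‖Ring.inverse (algebraMap ℂ A μ - a)‖ < M := by
    refine lt_of_le_of_lt (hab μ hμu.1 hμb) (hball μ ?_)
    rw [mem_ball, dist_comm]
    exact lt_of_lt_of_le hμd (min_le_left _ _)
  have hinv : Ring.inverse (algebraMap ℂ A μ - a) = ((hμa.unit⁻¹ : Aˣ) : A) := by
    conv_lhs => rw [← hμa.unit_spec]
    exact Ring.inverse_unit _
  rw [hinv] at hnorm
  have hx : (0:ℝ) < ‖((hμa.unit⁻¹ : Aˣ) : A)‖ := by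
    rw [norm_pos_iff]
    intro h0
    have h1 := hμa.unit.mul_inv
    rw [h0, mul_zero] at h1
    exact one_ne_zero h1.symm
  have key : ‖(algebraMap ℂ A l' - a) - ((hμa.unit : Aˣ) : A)‖
      < ‖((hμa.unit⁻¹ : Aˣ) : A)‖⁻¹ := by
    rw [hμa.unit_spec]
    have heq : (algebraMap ℂ A l' - a) - (algebraMap ℂ A μ - a) = algebraMap ℂ A (l' - μ) := by
      rw [map_sub, sub_sub_sub_cancel_right]
    rw [heq, Algebra.algebraMap_eq_smul_one, norm_smul]
    have h1 : ‖l' - μ‖ < M⁻¹ / c := by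
      rw [← dist_eq_norm]
      exact lt_of_lt_of_le hμd (min_le_right _ _)
    have h2 : ‖(1:A)‖ ≤ c := by rw [hcdef]; linarith
    have h3 : ‖l' - μ‖ * ‖(1:A)‖ < M⁻¹ :=
      calc ‖l' - μ‖ * ‖(1:A)‖ ≤ ‖l' - μ‖ * c := by
            exact mul_le_mul_of_nonneg_left h2 (norm_nonneg _)
        _ < (M⁻¹ / c) * c := by exact mul_lt_mul_of_pos_right h1 hc
        _ = M⁻¹ := div_mul_cancel₀ _ (ne_of_gt hc)
    refine lt_of_lt_of_le h3 ?_
    exact inv_anti₀ (by positivity) (le_of_lt hnorm)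
  exact spectrum.mem_resolventSet_iff.2 (hμa.unit.ofNearby _ key).isUnit


lemma polyHull_spectrum_eq {A B : Type*} [NormedRing A] [NormedAlgebra ℂ A] [CompleteSpace A]
    [NormedRing B] [NormedAlgebra ℂ B] [CompleteSpace B] (a : A) (b : B)
    (hab : ∀ μ : ℂ, μ ∈ resolventSet ℂ a → μ ∈ resolventSet ℂ b →
      ‖Ring.inverse (algebraMap ℂ A μ - a)‖ ≤ ‖Ring.inverse (algebraMap ℂ B μ - b)‖)
    (hba : ∀ μ : ℂ, μ ∈ resolventSet ℂ b → μ ∈ resolventSet ℂ a →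
      ‖Ring.inverse (algebraMap ℂ B μ - b)‖ ≤ ‖Ring.inverse (algebraMap ℂ A μ - a)‖) :
    polyHull (spectrum ℂ a) = polyHull (spectrum ℂ b) := by
  set R : ℝ := max (‖a‖ * ‖(1 : A)‖) (‖b‖ * ‖(1 : B)‖) with hRdef
  have hR0 : 0 ≤ R :=
    le_trans (mul_nonneg (norm_nonneg _) (norm_nonneg _)) (le_max_right _ _)
  set w : ℂ := ((R + 1 : ℝ) : ℂ) with hwdef
  have hwnorm : ‖w‖ = R + 1 := by
    rw [hwdef, Complex.norm_real, Real.norm_eq_abs, abs_of_nonneg (by linarith)]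
  have hKa : spectrum ℂ a ⊆ Metric.closedBall 0 R :=
    (spectrum.subset_closedBall_norm_mul a).trans
      (Metric.closedBall_subset_closedBall (le_max_left _ _))
  have hKb : spectrum ℂ b ⊆ Metric.closedBall 0 R :=
    (spectrum.subset_closedBall_norm_mul b).trans
      (Metric.closedBall_subset_closedBall (le_max_right _ _))
  have hwa' : w ∉ spectrum ℂ a := by
    intro h
    have := hKa h
    rw [Metric.mem_closedBall, dist_zero_right, hwnorm] at this
    linarith
  have hwb' : w ∉ spectrum ℂ b := by
    intro h
    have := hKb h
    rw [Metric.mem_closedBall, dist_zero_right, hwnorm] at this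
    linarith
  have hwa : w ∈ resolventSet ℂ a :=
    spectrum.mem_resolventSet_iff.2 (spectrum.notMem_iff.mp hwa')
  have hwb : w ∈ resolventSet ℂ b :=
    spectrum.mem_resolventSet_iff.2 (spectrum.notMem_iff.mp hwb')
  have hwa'' : w ∈ (spectrum ℂ a)ᶜ := hwa'
  have hwb'' : w ∈ (spectrum ℂ b)ᶜ := hwb'
  have h1 : connectedComponentIn (spectrum ℂ b)ᶜ w ⊆ (spectrum ℂ a)ᶜ :=
    omega_subset a b hab hwa hwb
  have h2 : connectedComponentIn (spectrum ℂ a)ᶜ w ⊆ (spectrum ℂ b)ᶜ :=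
    omega_subset b a hba hwb hwa
  have e1 : connectedComponentIn (spectrum ℂ b)ᶜ w ⊆ connectedComponentIn (spectrum ℂ a)ᶜ w :=
    (isConnected_connectedComponentIn_iff.2 hwb'').isPreconnected.subset_connectedComponentIn
      (mem_connectedComponentIn hwb'') h1
  have e2 : connectedComponentIn (spectrum ℂ a)ᶜ w ⊆ connectedComponentIn (spectrum ℂ b)ᶜ w :=
    (isConnected_connectedComponentIn_iff.2 hwa'').isPreconnected.subset_connectedComponentIn
      (mem_connectedComponentIn hwa'') h2
  have heq : connectedComponentIn (spectrum ℂ a)ᶜ w = connectedComponentIn (spectrum ℂ b)ᶜ w :=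
    subset_antisymm e2 e1
  rw [polyHull_eq_compl hR0 hKa (by rw [hwnorm]; linarith),
    polyHull_eq_compl hR0 hKb (by rw [hwnorm]; linarith), heq]

theorem stmt6 {X : Type*} [NormedAddCommGroup X] [NormedSpace ℂ X] [CompleteSpace X]
    (T : X →L[ℂ] X) (Y : Submodule ℂ (StrongDual ℂ X))
    (hYc : IsClosed (Y : Set (StrongDual ℂ X)))
    (hYinv : ∀ y : StrongDual ℂ X, y ∈ Y → y.comp T ∈ Y)
    (hnd : ∀ x : X, ‖x‖ = sSup {r : ℝ | ∃ y : StrongDual ℂ X,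
        y ∈ Y ∧ ‖y‖ = 1 ∧ r = ‖y x‖})
    (S : Y →L[ℂ] Y)
    (hS : ∀ y : Y, (S y : StrongDual ℂ X) = (y : StrongDual ℂ X).comp T) :
    polyHull (@spectrum ℂ (Y →L[ℂ] Y) _ (@ContinuousLinearMap.ring ℂ _ Y _ _ _ _)
      (@ContinuousLinearMap.algebra ℂ ℂ Y _ _ _ _ _ _ _ _ _ _ _) S) = polyHull (spectrum ℂ T) := by
  haveI : CompleteSpace Y := hYc.completeSpace_coe
  letI iNG : NormedAddCommGroup Y := Submodule.normedAddCommGroup Y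
  letI iNS : NormedSpace ℂ Y := Submodule.normedSpace Y
  have hkey : ∀ (μ : ℂ) (y : Y), (((algebraMap ℂ (Y →L[ℂ] Y) μ - S) y : Y) : StrongDual ℂ X)
      = ((y : StrongDual ℂ X)).comp (algebraMap ℂ (X →L[ℂ] X) μ - T) := by
    intro μ y
    ext x
    simp only [ContinuousLinearMap.sub_apply, Algebra.algebraMap_eq_smul_one,
      ContinuousLinearMap.smul_apply, ContinuousLinearMap.one_apply,
      Submodule.coe_sub, Submodule.coe_smul, hS y,
      ContinuousLinearMap.coe_comp', Function.comp_apply,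
      ContinuousLinearMap.coe_sub', ContinuousLinearMap.coe_smul',
      Pi.sub_apply, Pi.smul_apply]
    rw [map_sub, map_smul]
  -- comparison A : for μ in ρ(T) ∩ ρ(S), ‖(T-μ)⁻¹‖ ≤ ‖(S-μ)⁻¹‖
  have hA : ∀ μ : ℂ, μ ∈ resolventSet ℂ T → μ ∈ resolventSet ℂ S →
      ‖Ring.inverse (algebraMap ℂ (X →L[ℂ] X) μ - T)‖
        ≤ ‖Ring.inverse (algebraMap ℂ (Y →L[ℂ] Y) μ - S)‖ := by
    intro μ hT hSr
    have hTu : IsUnit (algebraMap ℂ (X →L[ℂ] X) μ - T) := spectrum.mem_resolventSet_iff.1 hT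
    have hSu : IsUnit (algebraMap ℂ (Y →L[ℂ] Y) μ - S) := spectrum.mem_resolventSet_iff.1 hSr
    set RT := Ring.inverse (algebraMap ℂ (X →L[ℂ] X) μ - T) with hRT
    set RS := Ring.inverse (algebraMap ℂ (Y →L[ℂ] Y) μ - S) with hRS
    have hScan : ∀ v : Y, (algebraMap ℂ (Y →L[ℂ] Y) μ - S) (RS v) = v := by
      intro v
      have h := congrArg (fun f : Y →L[ℂ] Y => f v) (Ring.mul_inverse_cancel _ hSu)
      simpa [ContinuousLinearMap.mul_apply] using h
    have hTcan : ∀ v : X, (algebraMap ℂ (X →L[ℂ] X) μ - T) (RT v) = v := by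
      intro v
      have h := congrArg (fun f : X →L[ℂ] X => f v) (Ring.mul_inverse_cancel _ hTu)
      simpa [ContinuousLinearMap.mul_apply] using h
    have hbb : ∀ x : X, ‖x‖ ≤ ‖RS‖ * ‖(algebraMap ℂ (X →L[ℂ] X) μ - T) x‖ := by
      intro x
      rw [hnd x]
      apply Real.sSup_le
      · rintro r ⟨y, hyY, hy1, rfl⟩
        set yy : Y := ⟨y, hyY⟩ with hyy
        set u : Y := RS yy with hu
        have h1 : (algebraMap ℂ (Y →L[ℂ] Y) μ - S) u = yy := hScan yy
        have h2 : y = ((u : StrongDual ℂ X)).comp (algebraMap ℂ (X →L[ℂ] X) μ - T) := by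
          rw [← hkey μ u, h1]
        rw [h2]
        calc ‖((u : StrongDual ℂ X)).comp (algebraMap ℂ (X →L[ℂ] X) μ - T) x‖
            = ‖(u : StrongDual ℂ X) ((algebraMap ℂ (X →L[ℂ] X) μ - T) x)‖ := rfl
          _ ≤ ‖(u : StrongDual ℂ X)‖ * ‖(algebraMap ℂ (X →L[ℂ] X) μ - T) x‖ :=
              ContinuousLinearMap.le_opNorm _ _
          _ ≤ ‖RS‖ * ‖(algebraMap ℂ (X →L[ℂ] X) μ - T) x‖ := by
              apply mul_le_mul_of_nonneg_right _ (norm_nonneg _)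
              have : ‖(u : StrongDual ℂ X)‖ = ‖u‖ := rfl
              rw [this, hu]
              calc ‖RS yy‖ ≤ ‖RS‖ * ‖yy‖ := RS.le_opNorm yy
                _ = ‖RS‖ := by
                    have : ‖yy‖ = ‖y‖ := rfl
                    rw [this, hy1, mul_one]
      · positivity
    apply ContinuousLinearMap.opNorm_le_bound _ (norm_nonneg RS)
    intro v
    calc ‖RT v‖ ≤ ‖RS‖ * ‖(algebraMap ℂ (X →L[ℂ] X) μ - T) (RT v)‖ := hbb (RT v)
      _ = ‖RS‖ * ‖v‖ := by rw [hTcan v]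
  -- comparison B : for μ in ρ(S) ∩ ρ(T), ‖(S-μ)⁻¹‖ ≤ ‖(T-μ)⁻¹‖
  have hB : ∀ μ : ℂ, μ ∈ resolventSet ℂ S → μ ∈ resolventSet ℂ T →
      ‖Ring.inverse (algebraMap ℂ (Y →L[ℂ] Y) μ - S)‖
        ≤ ‖Ring.inverse (algebraMap ℂ (X →L[ℂ] X) μ - T)‖ := by
    intro μ hSr hT
    have hTu : IsUnit (algebraMap ℂ (X →L[ℂ] X) μ - T) := spectrum.mem_resolventSet_iff.1 hT
    have hSu : IsUnit (algebraMap ℂ (Y →L[ℂ] Y) μ - S) := spectrum.mem_resolventSet_iff.1 hSr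
    set RT := Ring.inverse (algebraMap ℂ (X →L[ℂ] X) μ - T) with hRT
    set RS := Ring.inverse (algebraMap ℂ (Y →L[ℂ] Y) μ - S) with hRS
    have hScan : ∀ v : Y, (algebraMap ℂ (Y →L[ℂ] Y) μ - S) (RS v) = v := by
      intro v
      have h := congrArg (fun f : Y →L[ℂ] Y => f v) (Ring.mul_inverse_cancel _ hSu)
      simpa [ContinuousLinearMap.mul_apply] using h
    have hTcan : ∀ v : X, (algebraMap ℂ (X →L[ℂ] X) μ - T) (RT v) = v := by
      intro v
      have h := congrArg (fun f : X →L[ℂ] X => f v) (Ring.mul_inverse_cancel _ hTu)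
      simpa [ContinuousLinearMap.mul_apply] using h
    have hbb : ∀ y : Y, ‖y‖ ≤ ‖RT‖ * ‖(algebraMap ℂ (Y →L[ℂ] Y) μ - S) y‖ := by
      intro y
      have hyn : ‖y‖ = ‖(y : StrongDual ℂ X)‖ := rfl
      rw [hyn]
      apply ContinuousLinearMap.opNorm_le_bound _ (by positivity)
      intro x
      have h1 : (y : StrongDual ℂ X) x
          = (y : StrongDual ℂ X) ((algebraMap ℂ (X →L[ℂ] X) μ - T) (RT x)) := by
        rw [hTcan x]
      rw [h1]
      have h2 : (y : StrongDual ℂ X) ((algebraMap ℂ (X →L[ℂ] X) μ - T) (RT x))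
          = ((((algebraMap ℂ (Y →L[ℂ] Y) μ - S) y : Y) : StrongDual ℂ X)) (RT x) := by
        rw [hkey μ y]; rfl
      rw [h2]
      calc ‖(((((algebraMap ℂ (Y →L[ℂ] Y) μ - S) y : Y)) : StrongDual ℂ X)) (RT x)‖
          ≤ ‖((((algebraMap ℂ (Y →L[ℂ] Y) μ - S) y : Y)) : StrongDual ℂ X)‖ * ‖RT x‖ :=
            ContinuousLinearMap.le_opNorm _ _
        _ ≤ ‖(algebraMap ℂ (Y →L[ℂ] Y) μ - S) y‖ * (‖RT‖ * ‖x‖) := by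
            apply mul_le_mul (le_of_eq rfl) (RT.le_opNorm x) (norm_nonneg _) (norm_nonneg _)
        _ = ‖RT‖ * ‖(algebraMap ℂ (Y →L[ℂ] Y) μ - S) y‖ * ‖x‖ := by ring
    apply ContinuousLinearMap.opNorm_le_bound _ (norm_nonneg RT)
    intro v
    calc ‖RS v‖ ≤ ‖RT‖ * ‖(algebraMap ℂ (Y →L[ℂ] Y) μ - S) (RS v)‖ := hbb (RS v)
      _ = ‖RT‖ * ‖v‖ := by rw [hScan v]
  exact polyHull_spectrum_eq S T hB hA
end

section
/- Let X and Y be complex Banach spaces with Y ⊆ X (continuous inclusion), and let T be a bounded operator on X with T(X) ⊆ Y. If Y ⊊ X, then σ(T_X) = σ(T_Y) ∪ {0}, where T_Y denotes the restriction of T to Y (a bounded operator by the closed graph theorem); if Y = X then σ(T_X) = σ(T_Y). -/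
open Filter Topology

theorem stmt7 {X Y : Type*} [NormedAddCommGroup X] [NormedSpace ℂ X] [CompleteSpace X]
    [NormedAddCommGroup Y] [NormedSpace ℂ Y] [CompleteSpace Y]
    (ι : Y →L[ℂ] X) (hι : Function.Injective ι)
    (T : X →L[ℂ] X) (TY : Y →L[ℂ] Y)
    (hcomm : ∀ y : Y, ι (TY y) = T (ι y))
    (hrange : ∀ x : X, ∃ y : Y, ι y = T x) :
    (¬ Function.Surjective ι → spectrum ℂ T = spectrum ℂ TY ∪ {0}) ∧
    (Function.Surjective ι → spectrum ℂ T = spectrum ℂ TY) := by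
  classical
  choose g hg using hrange
  have gadd : ∀ x x', g (x + x') = g x + g x' := fun x x' => hι (by simp [hg, map_add])
  have gsmul : ∀ (c : ℂ) (x : X), g (c • x) = c • g x := fun c x => hι (by simp [hg])
  let glin : X →ₗ[ℂ] Y :=
    { toFun := g, map_add' := gadd, map_smul' := gsmul }
  have hgc : ∀ (u : ℕ → X) (x y), Tendsto u atTop (𝓝 x) →
      Tendsto (glin ∘ u) atTop (𝓝 y) → y = glin x := by
    intro u x y hu hgu
    apply hι
    have h1 : Tendsto (fun n => ι (g (u n))) atTop (𝓝 (ι y)) :=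
      (ι.continuous.tendsto y).comp hgu
    have h2 : Tendsto (fun n => ι (g (u n))) atTop (𝓝 (T x)) := by
      simpa only [hg, Function.comp_def] using (T.continuous.tendsto x).comp hu
    rw [tendsto_nhds_unique h1 h2]
    exact (hg x).symm
  let f : X →L[ℂ] Y := ContinuousLinearMap.ofSeqClosedGraph hgc
  have hf : ∀ x, ι (f x) = T x := hg
  -- pointwise descriptions of algebraMap
  have algX : ∀ (u : ℂ) (x : X), (algebraMap ℂ (X →L[ℂ] X) u - T) x = u • x - T x := by
    intro u x
    simp [Algebra.algebraMap_eq_smul_one]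
  have algY : ∀ (u : ℂ) (y : Y), (algebraMap ℂ (Y →L[ℂ] Y) u - TY) y = u • y - TY y := by
    intro u y
    simp [Algebra.algebraMap_eq_smul_one]
  -- key: for u ≠ 0 units transfer
  have key : ∀ u : ℂ, u ≠ 0 →
      (IsUnit (algebraMap ℂ (X →L[ℂ] X) u - T) ↔ IsUnit (algebraMap ℂ (Y →L[ℂ] Y) u - TY)) := by
    intro u hu
    constructor
    · rintro h
      rcases isUnit_iff_exists.mp h with ⟨S, hS1, hS2⟩
      have hS1' : ∀ x, u • S x - T (S x) = x := by
        intro x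
        have := DFunLike.congr_fun hS1 x
        simpa [ContinuousLinearMap.mul_apply, algX] using this
      have hS2' : ∀ x, S (u • x - T x) = x := by
        intro x
        have := DFunLike.congr_fun hS2 x
        simpa [ContinuousLinearMap.mul_apply, algX] using this
      set SY : Y →L[ℂ] Y := u⁻¹ • (ContinuousLinearMap.id ℂ Y + (f.comp S).comp ι) with hSYdef
      have hSY : ∀ y, ι (SY y) = S (ι y) := by
        intro y
        have hT : T (S (ι y)) = u • S (ι y) - ι y := by
          have := hS1' (ι y); linear_combination (norm := abel) -this
        have : ι (SY y) = u⁻¹ • (ι y + T (S (ι y))) := by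
          simp [hSYdef, hf, smul_sub]
        rw [this, hT]
        rw [show ι y + (u • S (ι y) - ι y) = u • S (ι y) by abel]
        rw [smul_smul, inv_mul_cancel₀ hu, one_smul]
      refine isUnit_iff_exists.mpr ⟨SY, ?_, ?_⟩
      · ext y
        apply hι
        simp only [ContinuousLinearMap.mul_apply, ContinuousLinearMap.one_apply, algY]
        rw [map_sub, map_smul, hcomm, hSY]
        exact hS1' (ι y)
      · ext y
        apply hι
        simp only [ContinuousLinearMap.mul_apply, ContinuousLinearMap.one_apply, algY]
        rw [hSY, map_sub, map_smul, hcomm]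
        exact hS2' (ι y)
    · rintro h
      rcases isUnit_iff_exists.mp h with ⟨R, hR1, hR2⟩
      have hR1' : ∀ y, u • R y - TY (R y) = y := by
        intro y
        have := DFunLike.congr_fun hR1 y
        simpa [ContinuousLinearMap.mul_apply, algY] using this
      have hR2' : ∀ y, R (u • y - TY y) = y := by
        intro y
        have := DFunLike.congr_fun hR2 y
        simpa [ContinuousLinearMap.mul_apply, algY] using this
      set S : X →L[ℂ] X := u⁻¹ • (ContinuousLinearMap.id ℂ X + (ι.comp R).comp f) with hSdef
      have hSx : ∀ x, S x = u⁻¹ • (x + ι (R (f x))) := by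
        intro x; simp [hSdef]
      have hTS : ∀ x, T (S x) = ι (R (f x)) := by
        intro x
        rw [hSx, map_smul, map_add, ← hf, ← hcomm, ← map_add]
        have : f x + TY (R (f x)) = u • R (f x) := by
          have := hR1' (f x); linear_combination (norm := abel) -this
        rw [this, map_smul, smul_smul, inv_mul_cancel₀ hu, one_smul]
      refine isUnit_iff_exists.mpr ⟨S, ?_, ?_⟩
      · ext x
        simp only [ContinuousLinearMap.mul_apply, ContinuousLinearMap.one_apply, algX]
        rw [hTS, hSx, smul_smul, mul_inv_cancel₀ hu, one_smul]
        abel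
      · ext x
        simp only [ContinuousLinearMap.mul_apply, ContinuousLinearMap.one_apply, algX]
        rw [hSx]
        have hfz : f (u • x - T x) = u • f x - TY (f x) := by
          apply hι
          simp [map_sub, map_smul, hf, hcomm]
        rw [hfz, hR2', hf]
        rw [show u • x - T x + T x = u • x by abel]
        rw [smul_smul, inv_mul_cancel₀ hu, one_smul]
  constructor
  · -- not surjective
    intro hns
    have h0 : (0 : ℂ) ∈ spectrum ℂ T := by
      rw [spectrum.mem_iff]
      intro hunit
      rcases isUnit_iff_exists.mp hunit with ⟨S, hS1, _⟩
      apply hns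
      intro x
      have hx : (0:ℂ) • S x - T (S x) = x := by
        have := DFunLike.congr_fun hS1 x
        simpa [ContinuousLinearMap.mul_apply, algX] using this
      refine ⟨f (-(S x)), ?_⟩
      rw [hf, map_neg]
      rw [zero_smul, zero_sub] at hx
      exact hx
    ext u
    by_cases hu : u = 0
    · subst hu
      simp [h0]
    · simp only [Set.mem_union, Set.mem_singleton_iff, hu, or_false,
        spectrum.mem_iff, key u hu]
  · -- surjective
    intro hs
    let e : Y ≃L[ℂ] X :=
      (LinearEquiv.ofBijective ι.toLinearMap ⟨hι, hs⟩).toContinuousLinearEquivOfContinuous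
        ι.continuous
    have he : ∀ y, e y = ι y := fun y => rfl
    have he' : ∀ x, ι (e.symm x) = x := by
      intro x
      rw [← he]
      exact e.apply_symm_apply x
    have conj : ∀ u : ℂ,
        (IsUnit (algebraMap ℂ (X →L[ℂ] X) u - T) ↔ IsUnit (algebraMap ℂ (Y →L[ℂ] Y) u - TY)) := by
      intro u
      constructor
      · rintro h
        rcases isUnit_iff_exists.mp h with ⟨S, hS1, hS2⟩
        have hS1' : ∀ x, u • S x - T (S x) = x := by
          intro x
          have := DFunLike.congr_fun hS1 x
          simpa [ContinuousLinearMap.mul_apply, algX] using this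
        have hS2' : ∀ x, S (u • x - T x) = x := by
          intro x
          have := DFunLike.congr_fun hS2 x
          simpa [ContinuousLinearMap.mul_apply, algX] using this
        set SY : Y →L[ℂ] Y := ((e.symm : X →L[ℂ] Y).comp S).comp ι with hSYdef
        have hSY : ∀ y, ι (SY y) = S (ι y) := by
          intro y; simp [hSYdef, he']
        refine isUnit_iff_exists.mpr ⟨SY, ?_, ?_⟩
        · ext y
          apply hι
          simp only [ContinuousLinearMap.mul_apply, ContinuousLinearMap.one_apply, algY]
          rw [map_sub, map_smul, hcomm, hSY]
          exact hS1' (ι y)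
        · ext y
          apply hι
          simp only [ContinuousLinearMap.mul_apply, ContinuousLinearMap.one_apply, algY]
          rw [hSY, map_sub, map_smul, hcomm]
          exact hS2' (ι y)
      · rintro h
        rcases isUnit_iff_exists.mp h with ⟨R, hR1, hR2⟩
        have hR1' : ∀ y, u • R y - TY (R y) = y := by
          intro y
          have := DFunLike.congr_fun hR1 y
          simpa [ContinuousLinearMap.mul_apply, algY] using this
        have hR2' : ∀ y, R (u • y - TY y) = y := by
          intro y
          have := DFunLike.congr_fun hR2 y
          simpa [ContinuousLinearMap.mul_apply, algY] using this
        set S : X →L[ℂ] X := (ι.comp R).comp (e.symm : X →L[ℂ] Y) with hSdef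
        have hSx : ∀ x, S x = ι (R (e.symm x)) := fun x => rfl
        refine isUnit_iff_exists.mpr ⟨S, ?_, ?_⟩
        · ext x
          simp only [ContinuousLinearMap.mul_apply, ContinuousLinearMap.one_apply, algX]
          rw [hSx, ← hcomm, ← map_smul, ← map_sub, hR1', he']
        · ext x
          simp only [ContinuousLinearMap.mul_apply, ContinuousLinearMap.one_apply, algX]
          rw [hSx]
          have h1 : e.symm (u • x - T x) = u • e.symm x - TY (e.symm x) := by
            apply hι
            rw [he', map_sub, map_smul, hcomm, he']
          rw [h1, hR2', he']
    ext u
    simp only [spectrum.mem_iff, conj u]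
end

section
/- Let N be a closed subspace of a complex Banach space X, Z := X/N, and T a bounded operator on X with Tn = 0 for all n ∈ N (so T induces an operator on Z). If N ≠ {0}, then σ(T_X) = σ(T_Z) ∪ {0}. -/
theorem stmt9 {X : Type*} [NormedAddCommGroup X] [NormedSpace ℂ X] [CompleteSpace X]
    (N : Submodule ℂ X) (hNc : IsClosed (N : Set X)) (hN : N ≠ ⊥)
    (T : X →L[ℂ] X) (hT0 : ∀ x ∈ N, T x = 0)
    (TZ : (X ⧸ N) →L[ℂ] (X ⧸ N))
    (hTZ : ∀ x : X, TZ (Submodule.Quotient.mk x) = Submodule.Quotient.mk (T x)) :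
    spectrum ℂ T = spectrum ℂ TZ ∪ {0} := by
  obtain ⟨n₀, hn₀N, hn₀⟩ := Submodule.exists_mem_ne_zero_of_ne_bot hN
  have h0 : (0 : ℂ) ∈ spectrum ℂ T := by
    rw [spectrum.mem_iff, ContinuousLinearMap.isUnit_iff_bijective]
    intro h
    apply hn₀
    have := h.1 (a₁ := n₀) (a₂ := 0)
    simp only [map_zero, map_sub, ContinuousLinearMap.coe_sub'] at this
    apply this
    simp [hT0 n₀ hn₀N]
  have happ : ∀ (lam : ℂ) (x : X),
      (algebraMap ℂ (X →L[ℂ] X) lam - T) x = lam • x - T x := by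
    intro lam x
    simp [Algebra.algebraMap_eq_smul_one]
  have happZ : ∀ (lam : ℂ) (z : X ⧸ N),
      (algebraMap ℂ ((X ⧸ N) →L[ℂ] (X ⧸ N)) lam - TZ) z = lam • z - TZ z := by
    intro lam z
    simp [Algebra.algebraMap_eq_smul_one]
  ext l
  simp only [Set.mem_union, Set.mem_singleton_iff]
  constructor
  · intro hl
    by_cases hl0 : l = 0
    · right; exact hl0
    left
    rw [spectrum.mem_iff, ContinuousLinearMap.isUnit_iff_bijective] at hl ⊢
    intro hbij
    apply hl
    constructor
    · -- injectivity of l•1 - T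
      intro x y hxy
      rw [happ, happ] at hxy
      have hq : (l • (Submodule.Quotient.mk x : X ⧸ N) - TZ (Submodule.Quotient.mk x))
          = l • (Submodule.Quotient.mk y : X ⧸ N) - TZ (Submodule.Quotient.mk y) := by
        rw [hTZ, hTZ, ← Submodule.Quotient.mk_smul, ← Submodule.Quotient.mk_smul,
          ← Submodule.Quotient.mk_sub, ← Submodule.Quotient.mk_sub, hxy]
      rw [← happZ, ← happZ] at hq
      have hxyq := hbij.1 hq
      -- x - y ∈ N
      have hmem : x - y ∈ N := (Submodule.Quotient.eq N).mp hxyq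
      have hT : T (x - y) = 0 := hT0 _ hmem
      have : l • (x - y) = 0 := by
        rw [map_sub] at hT
        have := sub_eq_zero.mp hT
        rw [smul_sub]
        rw [sub_eq_zero]
        have h2 : l • x - T x = l • y - T y := hxy
        rw [this] at h2
        linear_combination (norm := module) h2
      rcases smul_eq_zero.mp this with h | h
      · exact absurd h hl0
      · exact sub_eq_zero.mp h
    · -- surjectivity
      intro y
      obtain ⟨z, hz⟩ := hbij.2 (Submodule.Quotient.mk y)
      obtain ⟨x, rfl⟩ := Submodule.Quotient.mk_surjective N z
      rw [happZ, hTZ, ← Submodule.Quotient.mk_smul, ← Submodule.Quotient.mk_sub,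
        Submodule.Quotient.eq] at hz
      set n := l • x - T x - y with hn
      have hnN : n ∈ N := hz
      refine ⟨x - l⁻¹ • n, ?_⟩
      rw [happ]
      have hTn : T n = 0 := hT0 _ hnN
      rw [map_sub, map_smul, hTn, smul_zero, sub_zero, smul_sub, smul_smul,
        mul_inv_cancel₀ hl0, one_smul]
      rw [hn]
      module
  · rintro (hl | rfl)
    · -- spectrum TZ ⊆ spectrum T
      rw [spectrum.mem_iff, ContinuousLinearMap.isUnit_iff_bijective] at hl ⊢
      intro hbij
      apply hl
      have hl0 : l ≠ 0 := by
        rintro rfl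
        rw [spectrum.mem_iff, ContinuousLinearMap.isUnit_iff_bijective] at h0
        exact h0 hbij
      constructor
      · intro z w hzw
        obtain ⟨x, rfl⟩ := Submodule.Quotient.mk_surjective N z
        obtain ⟨y, rfl⟩ := Submodule.Quotient.mk_surjective N w
        rw [happZ, happZ, hTZ, hTZ, ← Submodule.Quotient.mk_smul, ← Submodule.Quotient.mk_smul,
          ← Submodule.Quotient.mk_sub, ← Submodule.Quotient.mk_sub, Submodule.Quotient.eq] at hzw
        set n := (l • x - T x) - (l • y - T y) with hn
        have hnN : n ∈ N := hzw
        -- (l•1 - T) (l⁻¹ • n) = n since T n = 0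
        have key : (algebraMap ℂ (X →L[ℂ] X) l - T) (l⁻¹ • n) = n := by
          rw [happ, map_smul, hT0 _ hnN, smul_zero, sub_zero, smul_smul,
            mul_inv_cancel₀ hl0, one_smul]
        have key2 : (algebraMap ℂ (X →L[ℂ] X) l - T) (x - y) = n := by
          rw [happ, hn, map_sub]
          module
        have := hbij.1 (key2.trans key.symm)
        -- x - y = l⁻¹ • n ∈ N
        have hmem : x - y ∈ N := this ▸ Submodule.smul_mem N l⁻¹ hnN
        rw [Submodule.Quotient.eq]
        exact hmem
      · intro z
        obtain ⟨y, rfl⟩ := Submodule.Quotient.mk_surjective N z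
        obtain ⟨x, hx⟩ := hbij.2 y
        refine ⟨Submodule.Quotient.mk x, ?_⟩
        rw [happZ, hTZ, ← Submodule.Quotient.mk_smul, ← Submodule.Quotient.mk_sub, ← happ, hx]
    · exact h0
end

section
/- Let P be a bounded operator on a complex Banach space with σ(P) ⊆ {|z| ≤ 1}, 1 ∈ σ(P), and η := inf{|1-s| : s ∈ σ(P)∖{1}} > 0. For an integer T ≥ 2 define R := (1/T) ∑_{i=0}^{T-1} P^i. Then σ(R) = {(1/T)∑_{i=0}^{T-1} s^i : s ∈ σ(P)} by the spectral mapping theorem, and every λ ∈ σ(R)∖{1} satisfies |λ| ≤ 2/(ηT). Consequently, if T > 4/η, then sup{Re λ : λ ∈ σ(R)∖{1}} < 1/2. -/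
open Polynomial Finset

theorem stmt16 {A : Type*} [NormedRing A] [NormedAlgebra ℂ A] [CompleteSpace A]
    (P : A) (hσ : spectrum ℂ P ⊆ Metric.closedBall 0 1)
    (h1 : (1 : ℂ) ∈ spectrum ℂ P)
    (η : ℝ) (hη : 0 < η)
    (hη2 : ∀ s ∈ spectrum ℂ P \ {1}, η ≤ ‖1 - s‖)
    (T : ℕ) (hT : 2 ≤ T) :
    spectrum ℂ ((T : ℂ)⁻¹ • ∑ i ∈ Finset.range T, P ^ i)
        = (fun s : ℂ => (T : ℂ)⁻¹ * ∑ i ∈ Finset.range T, s ^ i) '' spectrum ℂ P ∧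
    (∀ lam ∈ spectrum ℂ ((T : ℂ)⁻¹ • ∑ i ∈ Finset.range T, P ^ i) \ {1},
        ‖lam‖ ≤ 2 / (η * T)) ∧
    (4 / η < (T : ℝ) →
      sSup (Complex.re ''
          (spectrum ℂ ((T : ℂ)⁻¹ • ∑ i ∈ Finset.range T, P ^ i) \ {1})) < 1 / 2) := by
  have hA : Nontrivial A := by
    rcases subsingleton_or_nontrivial A with h | h
    · exact absurd (isUnit_of_subsingleton _) h1
    · exact h
  have hTpos : (0 : ℝ) < T := by positivity
  have hTC : ((T : ℂ)) ≠ 0 := by exact Nat.cast_ne_zero.mpr (by omega)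
  -- spectral mapping
  set p : ℂ[X] := C (T : ℂ)⁻¹ * ∑ i ∈ range T, X ^ i with hp
  have haeval : aeval P p = (T : ℂ)⁻¹ • ∑ i ∈ Finset.range T, P ^ i := by
    simp [hp, map_sum, Algebra.smul_def]
  have heval : ∀ k : ℂ, eval k p = (T : ℂ)⁻¹ * ∑ i ∈ Finset.range T, k ^ i := by
    intro k; simp [hp, eval_finset_sum]
  have hmap : spectrum ℂ ((T : ℂ)⁻¹ • ∑ i ∈ Finset.range T, P ^ i)
      = (fun s : ℂ => (T : ℂ)⁻¹ * ∑ i ∈ Finset.range T, s ^ i) '' spectrum ℂ P := by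
    rw [← haeval, spectrum.map_polynomial_aeval P p]
    exact Set.image_congr fun k _ => heval k
  refine ⟨hmap, ?_, ?_⟩
  -- the bound
  · intro lam hlam
    obtain ⟨hmem, hne⟩ := hlam
    rw [hmap] at hmem
    obtain ⟨s, hs, rfl⟩ := hmem
    have hs1 : s ≠ 1 := by
      rintro rfl
      apply hne
      simp only [one_pow, Finset.sum_const, Finset.card_range, nsmul_eq_mul, mul_one]
      exact Set.mem_singleton_iff.mpr (inv_mul_cancel₀ hTC)
    have habs : ‖s‖ ≤ 1 := by
      have := hσ hs
      simpa [Complex.dist_eq] using this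
    have hηs : η ≤ ‖1 - s‖ := hη2 s ⟨hs, hs1⟩
    have hgeom : ∑ i ∈ Finset.range T, s ^ i = (s ^ T - 1) / (s - 1) :=
      geom_sum_eq hs1 T
    have h1s : ‖s - 1‖ = ‖1 - s‖ := by
      rw [← norm_neg]; ring_nf
    have hnum : ‖s ^ T - 1‖ ≤ 2 := by
      calc ‖s ^ T - 1‖ ≤ ‖s ^ T‖ + ‖(1 : ℂ)‖ := by
            simpa [sub_eq_add_neg] using norm_add_le (s ^ T) (-1)
        _ ≤ 1 + 1 := by
            simp only [norm_pow, norm_one]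
            gcongr
            exact pow_le_one₀ (norm_nonneg s) habs
        _ = 2 := by norm_num
    calc ‖(T : ℂ)⁻¹ * ∑ i ∈ Finset.range T, s ^ i‖
        = (T : ℝ)⁻¹ * (‖s ^ T - 1‖ / ‖s - 1‖) := by
          rw [hgeom, norm_mul, norm_div]
          simp
      _ ≤ (T : ℝ)⁻¹ * (2 / η) :=
          mul_le_mul_of_nonneg_left
            (div_le_div₀ (by norm_num) hnum hη (h1s ▸ hηs)) (by positivity)
      _ = 2 / (η * T) := by field_simp
  -- the sup
  · intro hT4
    have hbound : 2 / (η * T) < 1 / 2 := by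
      rw [div_lt_div_iff₀ (by positivity) (by norm_num)]
      have : 4 < η * T := by
        rw [div_lt_iff₀ hη] at hT4
        linarith [hT4]
      linarith
    refine lt_of_le_of_lt (Real.sSup_le ?_ (by positivity)) hbound
    rintro x ⟨lam, hlam, rfl⟩
    have h2 : ‖lam‖ ≤ 2 / (η * T) := by
      -- reuse first part via hmap
      have := hlam
      revert this
      intro hlam'
      -- prove directly
      exact (by
        obtain ⟨hmem, hne⟩ := hlam'
        rw [hmap] at hmem
        obtain ⟨s, hs, rfl⟩ := hmem
        have hs1 : s ≠ 1 := by
          rintro rfl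
          apply hne
          simp only [one_pow, Finset.sum_const, Finset.card_range, nsmul_eq_mul, mul_one]
          exact Set.mem_singleton_iff.mpr (inv_mul_cancel₀ hTC)
        have habs : ‖s‖ ≤ 1 := by
          have := hσ hs
          simpa [Complex.dist_eq] using this
        have hηs : η ≤ ‖1 - s‖ := hη2 s ⟨hs, hs1⟩
        have hgeom : ∑ i ∈ Finset.range T, s ^ i = (s ^ T - 1) / (s - 1) :=
          geom_sum_eq hs1 T
        have h1s : ‖s - 1‖ = ‖1 - s‖ := by
          rw [← norm_neg]; ring_nf
        have hnum : ‖s ^ T - 1‖ ≤ 2 := by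
          calc ‖s ^ T - 1‖ ≤ ‖s ^ T‖ + ‖(1 : ℂ)‖ := by
                simpa [sub_eq_add_neg] using norm_add_le (s ^ T) (-1)
            _ ≤ 1 + 1 := by
                simp only [norm_pow, norm_one]
                gcongr
                exact pow_le_one₀ (norm_nonneg s) habs
            _ = 2 := by norm_num
        calc ‖(T : ℂ)⁻¹ * ∑ i ∈ Finset.range T, s ^ i‖
            = (T : ℝ)⁻¹ * (‖s ^ T - 1‖ / ‖s - 1‖) := by
              rw [hgeom, norm_mul, norm_div]
              simp
          _ ≤ (T : ℝ)⁻¹ * (2 / η) :=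
              mul_le_mul_of_nonneg_left
                (div_le_div₀ (by norm_num) hnum hη (h1s ▸ hηs)) (by positivity)
          _ = 2 / (η * T) := by field_simp)
    calc lam.re ≤ ‖lam‖ := Complex.re_le_norm lam
      _ ≤ 2 / (η * T) := h2
end
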